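/- arXiv:1510.02637 — 3 statements merged into one kernel-verified Lean document; each statement's English description precedes it below -/
import Mathlib

section
/- Let w be a word of length n ≥ 1 over Σ that is not self-minimal, let z be the maximal letter of Σ, and let w' be the lexicographically greatest self-minimal word of length n with w' ≤ w (which exists, since the constant word consisting of n copies of the minimal letter of Σ is self-minimal and ≤ w). Then there exists an index k with 1 ≤ k ≤ n such that w[k] is not the minimal letter of Σ and w' = w_(k-1)·b'·z^(n-k), where b' is the greatest letter of Σ that is smaller than w[k]. -/
namespace Lyndon

variable {α : Type*}

/-- `rot w c` is the cyclic rotation of `w` obtained by moving its first `c mod |w|`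
letters to the end. -/
def rot (w : List α) (c : ℕ) : List α :=
  w.drop (c % w.length) ++ w.take (c % w.length)

/-- `power w k` is the concatenation of `k` copies of `w`. -/
def power (w : List α) (k : ℕ) : List α := (List.replicate k w).flatten

/-- `minrot w` is the lexicographically minimal cyclic rotation of `w`. -/
def minrot [LinearOrder α] (w : List α) : List α :=
  ((List.range w.length).map (rot w)).foldr min w

/-- A word is self-minimal if it equals its minimal cyclic rotation. -/
def SelfMinimal [LinearOrder α] (w : List α) : Prop := minrot w = w

/-- A word is primitive if it is a `k`-th power (for a positive integer `k`)
only of itself. -/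
def Primitive (w : List α) : Prop :=
  ∀ (u : List α) (k : ℕ), 0 < k → w = power u k → u = w

/-- A Lyndon word is a nonempty word that is primitive and self-minimal. -/
def IsLyndon [LinearOrder α] (w : List α) : Prop :=
  w ≠ [] ∧ Primitive w ∧ SelfMinimal w

/-- `Pref₋(w)`: the words `w_(i)·s` for `0 ≤ i ≤ n-1` and a letter `s < w[i+1]`,
together with `w` itself. -/
def PrefMinus [LinearOrder α] (w : List α) : Set (List α) :=
  {y | (∃ i : Fin w.length, ∃ s : α, s < w.get i ∧ y = w.take i ++ [s]) ∨ y = w}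

/-- `L(w)`: the words containing a factor (contiguous subword) from `Pref₋(w)`. -/
def InL [LinearOrder α] (w x : List α) : Prop :=
  ∃ y ∈ PrefMinus w, y <:+: x

/-!
As `w` is not self-minimal, `w' < w`; let `d` be the first position where they differ.
Raising the letter at position `d` of a self-minimal word and filling everything after it with
the maximal letter `z` keeps the word self-minimal: a rotation starting after `d` begins with
`z`s, and a rotation starting at `i ≤ d` can only match a prefix by copying letters from the
unchanged part. So `w_(d)·c·z^(n-d-1)` is self-minimal and smaller than `w` for every letter
`w'[d] ≤ c < w[d]`, and the maximality of `w'` forces `w' = w_(d)·w'[d]·z^(n-d-1)` with `w'[d]`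
the greatest letter below `w[d]`.
-/

theorem le_foldr_min_iff {β : Type*} [LinearOrder β] {l : List β} {a b : β} :
    a ≤ l.foldr min b ↔ a ≤ b ∧ ∀ x ∈ l, a ≤ x := by
  induction l <;> simp_all [and_left_comm]

theorem foldr_min_eq_iff {β : Type*} [LinearOrder β] {l : List β} {b : β} :
    l.foldr min b = b ↔ ∀ x ∈ l, b ≤ x := by
  have hle : l.foldr min b ≤ b := (le_foldr_min_iff.mp le_rfl).1
  rw [le_antisymm_iff, and_iff_right hle, le_foldr_min_iff, and_iff_right le_rfl]

theorem length_rot (w : List α) (i : ℕ) : (rot w i).length = w.length := by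
  simp only [rot, List.length_append, List.length_drop, List.length_take]
  omega

theorem getD_rot (a₀ : α) (w : List α) {i t : ℕ} (hi : i < w.length) (ht : t < w.length) :
    (rot w i).getD t a₀ = w.getD ((i + t) % w.length) a₀ := by
  simp only [rot, Nat.mod_eq_of_lt hi, List.getD_eq_getElem?_getD, List.getElem?_append,
    List.getElem?_drop, List.getElem?_take, List.length_drop]
  split_ifs with h h'
  · rw [Nat.mod_eq_of_lt (by omega)]
  · rw [Nat.mod_eq_sub_mod (by omega), Nat.mod_eq_of_lt (by omega)]
    congr 2
    omega
  · omega

section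

variable [LinearOrder α]

theorem lt_iff_exists_getD_of_length_eq (a₀ : α) {x y : List α} (h : x.length = y.length) :
    x < y ↔ ∃ t < y.length, (∀ s < t, x.getD s a₀ = y.getD s a₀) ∧
      x.getD t a₀ < y.getD t a₀ := by
  rw [List.lt_iff_exists]
  constructor
  · rintro (⟨-, hlen⟩ | ⟨t, ht, ht', hpre, hlt⟩)
    · omega
    · refine ⟨t, ht', fun s hs => ?_, ?_⟩
      · rw [List.getD_eq_getElem _ _ (by omega), List.getD_eq_getElem _ _ (by omega)]
        exact hpre s hs
      · rwa [List.getD_eq_getElem _ _ ht, List.getD_eq_getElem _ _ ht']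
  · rintro ⟨t, ht, hpre, hlt⟩
    refine Or.inr ⟨t, by omega, ht, fun s hs => ?_, ?_⟩
    · have hs' := hpre s hs
      rwa [List.getD_eq_getElem _ _ (by omega), List.getD_eq_getElem _ _ (by omega)] at hs'
    · rwa [List.getD_eq_getElem _ _ (by omega), List.getD_eq_getElem _ _ ht] at hlt

theorem exists_take_eq_and_getElem_lt {x y : List α} (hlt : x < y) (h : x.length = y.length) :
    ∃ d, ∃ (hx : d < x.length) (hy : d < y.length), x.take d = y.take d ∧ x[d] < y[d] := by
  rcases List.lt_iff_exists.mp hlt with ⟨-, hlen⟩ | ⟨d, hx, hy, hpre, hd⟩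
  · omega
  refine ⟨d, hx, hy, List.ext_getElem (by simp only [List.length_take]; omega)
    fun j h₁ _ => ?_, hd⟩
  simpa using hpre j (by simp only [List.length_take] at h₁; omega)

theorem append_le_append_left (l : List α) {l₁ l₂ : List α} (h : l₁ ≤ l₂) :
    l ++ l₁ ≤ l ++ l₂ := by
  rcases h.lt_or_eq with h | rfl
  exacts [(List.append_left_lt h).le, le_rfl]

theorem le_replicate_of_forall_le {z : α} (hz : ∀ a, a ≤ z) :
    ∀ {l : List α} {m : ℕ}, l.length = m → l ≤ List.replicate m z
  | [], _, rfl => le_rfl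
  | a :: l, _, rfl => by
    rw [List.length_cons, List.replicate_succ]
    rcases (hz a).lt_or_eq with ha | rfl
    · exact (List.cons_lt_cons_iff.mpr (Or.inl ha)).le
    · exact List.cons_le_cons a (le_replicate_of_forall_le hz rfl)

theorem selfMinimal_iff_le_rot {w : List α} :
    SelfMinimal w ↔ ∀ i < w.length, w ≤ rot w i := by
  simp [SelfMinimal, minrot, foldr_min_eq_iff]

/-- `f` read on `[0, n)` is lexicographically at most each of its cyclic shifts. -/
def ShiftMinimal (n : ℕ) (f : ℕ → α) : Prop :=
  ∀ i < n, ∀ t < n, (∀ s < t, f ((i + s) % n) = f s) → f t ≤ f ((i + t) % n)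

theorem selfMinimal_iff_shiftMinimal (a₀ : α) (w : List α) :
    SelfMinimal w ↔ ShiftMinimal w.length (fun k => w.getD k a₀) := by
  rw [selfMinimal_iff_le_rot]
  refine forall₂_congr fun i hi => ?_
  rw [← not_lt, lt_iff_exists_getD_of_length_eq a₀ (length_rot w i)]
  push Not
  refine forall₂_congr fun t ht => ?_
  rw [getD_rot a₀ w hi ht]
  exact imp_congr_left (forall₂_congr fun s hs => by rw [getD_rot a₀ w hi (hs.trans ht)])

namespace ShiftMinimal

variable {n : ℕ} {f g : ℕ → α}

theorem congr (hf : ShiftMinimal n f) (hfg : ∀ k < n, f k = g k) : ShiftMinimal n g := by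
  intro i hi t ht E
  have hn : 0 < n := by omega
  rw [← hfg t ht, ← hfg _ (Nat.mod_lt _ hn)]
  refine hf i hi t ht fun s hs => ?_
  rw [hfg _ (Nat.mod_lt _ hn), hfg s (hs.trans ht)]
  exact E s hs

theorem apply_zero_le (hf : ShiftMinimal n f) {k : ℕ} (hk : k < n) : f 0 ≤ f k := by
  simpa [Nat.mod_eq_of_lt hk] using hf k hk 0 (by omega) (by simp)

/-- Since `g` can only exceed `f` at positions `≥ d ≥ i`, each letter of `g` inside the match
of `g` with its `i`-shift is copied from one `i` places earlier, where `g` still equals `f`. -/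
theorem apply_le_apply_shift {d i t : ℕ} (hf : ShiftMinimal n f) (hfg : ∀ k < n, f k ≤ g k)
    (hgf : ∀ k < d, g k = f k) (hi : i < n) (hi0 : 0 < i) (hid : i ≤ d) (ht : t < n)
    (E : ∀ s < t, g ((i + s) % n) = g s) : g t ≤ g ((i + t) % n) := by
  have hn : 0 < n := by omega
  have key : ∀ s ≤ t, g s = f s ∧ (s < t → f ((i + s) % n) = f s) := by
    intro s
    induction s using Nat.strong_induction_on with
    | _ s IH =>
      intro hst
      have hgs : g s = f s := by
        rcases lt_or_ge s d with hsd | hsd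
        · exact hgf s hsd
        · obtain ⟨hg, hf'⟩ := IH (s - i) (by omega) (by omega)
          have hmod : (i + (s - i)) % n = s := by
            rw [Nat.add_sub_cancel' (by omega), Nat.mod_eq_of_lt (by omega)]
          have e := E (s - i) (by omega)
          rw [hmod] at e hf'
          rw [e, hg, hf' (by omega)]
      refine ⟨hgs, fun hst' => le_antisymm ?_ ?_⟩
      · calc f ((i + s) % n) ≤ g ((i + s) % n) := hfg _ (Nat.mod_lt _ hn)
          _ = g s := E s hst'
          _ = f s := hgs
      · exact hf i hi s (by omega) fun s' hs' => (IH s' hs' (by omega)).2 (by omega)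
  calc g t = f t := (key t le_rfl).1
    _ ≤ f ((i + t) % n) := hf i hi t ht fun s hs => (key s hs.le).2 hs
    _ ≤ g ((i + t) % n) := hfg _ (Nat.mod_lt _ hn)

theorem update_fill (hf : ShiftMinimal n f) {d : ℕ} (hd : d < n) {c z : α} (hc : f d ≤ c)
    (hz : ∀ a, a ≤ z) :
    ShiftMinimal n (fun k => if k < d then f k else if k = d then c else z) := by
  set g : ℕ → α := fun k => if k < d then f k else if k = d then c else z
  have hfg : ∀ k < n, f k ≤ g k := by
    intro k _
    simp only [g]
    split_ifs with h₁ h₂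
    exacts [le_rfl, h₂ ▸ hc, hz _]
  have hg0 : ∀ k < n, g 0 ≤ g k := by
    intro k hk
    rcases Nat.eq_zero_or_pos d with rfl | hd0
    · rcases Nat.eq_zero_or_pos k with rfl | hk0
      · exact le_rfl
      · simp only [g, if_neg hk0.ne']
        exact hz _
    · calc g 0 = f 0 := if_pos hd0
        _ ≤ f k := hf.apply_zero_le hk
        _ ≤ g k := hfg k hk
  intro i hi t ht E
  rcases Nat.eq_zero_or_pos i with rfl | hi0
  · simp [Nat.mod_eq_of_lt ht]
  rcases le_or_gt i d with hid | hdi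
  · exact hf.apply_le_apply_shift hfg (fun k hk => if_pos hk) hi hi0 hid ht E
  rcases Nat.eq_zero_or_pos t with rfl | ht0
  · exact hg0 _ (Nat.mod_lt _ (by omega))
  have hg0z : g 0 = z := by
    have hgi : g i = z := by simp only [g, if_neg (show ¬i < d by omega), if_neg hdi.ne']
    simpa [Nat.mod_eq_of_lt hi, hgi] using (E 0 ht0).symm
  calc g t ≤ g 0 := hg0z ▸ hz _
    _ ≤ g ((i + t) % n) := hg0 _ (Nat.mod_lt _ (by omega))

end ShiftMinimal

theorem SelfMinimal.take_append_cons_replicate {u : List α} (hu : SelfMinimal u) {d : ℕ}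
    (hd : d < u.length) {c z : α} (hc : u[d] ≤ c) (hz : ∀ a, a ≤ z) :
    SelfMinimal (u.take d ++ c :: List.replicate (u.length - (d + 1)) z) := by
  have hlen : (u.take d ++ c :: List.replicate (u.length - (d + 1)) z).length = u.length := by
    simp only [List.length_append, List.length_take, List.length_cons, List.length_replicate]
    omega
  rw [selfMinimal_iff_shiftMinimal c] at hu ⊢
  rw [hlen]
  refine (hu.update_fill hd (c := c) (by rwa [List.getD_eq_getElem _ _ hd]) hz).congr
    fun k hk => ?_
  have hd' : min d u.length = d := by omega
  simp only [List.getD_eq_getElem?_getD, List.getElem?_append, List.getElem?_cons,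
    List.getElem?_take, List.getElem?_replicate, List.length_take, hd']
  split_ifs <;> first | omega | simp

end

theorem stmt_2_general [LinearOrder α]
    (w w' : List α) (n : ℕ) (hw : w.length = n)
    (hnotsm : ¬ SelfMinimal w)
    (z : α) (hz : ∀ a : α, a ≤ z)
    (hw'len : w'.length = n) (hw'sm : SelfMinimal w') (hw'le : w' ≤ w)
    (hw'max : ∀ u : List α, u.length = n → SelfMinimal u → u ≤ w → u ≤ w') :
    ∃ k, 1 ≤ k ∧ k ≤ n ∧ ∃ (hk : k - 1 < w.length),
      (∃ a : α, a < w.get ⟨k - 1, hk⟩) ∧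
      ∃ b' : α, b' < w.get ⟨k - 1, hk⟩ ∧
        (∀ a : α, a < w.get ⟨k - 1, hk⟩ → a ≤ b') ∧
        w' = w.take (k - 1) ++ [b'] ++ List.replicate (n - k) z := by
  have hlt : w' < w := hw'le.lt_of_ne fun h => hnotsm (h ▸ hw'sm)
  obtain ⟨d, hd', hd, htake, hdlt⟩ := exists_take_eq_and_getElem_lt hlt (by rw [hw'len, hw])
  set v : α → List α := fun c => w.take d ++ c :: List.replicate (n - (d + 1)) z
  have hv_len : ∀ c, (v c).length = n := fun c => by
    simp only [v, List.length_append, List.length_take, List.length_cons, List.length_replicate]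
    omega
  have hv_sm : ∀ c, w'[d] ≤ c → SelfMinimal (v c) := fun c hc => by
    simpa [v, htake, hw'len] using hw'sm.take_append_cons_replicate hd' hc hz
  have hv_lt : ∀ c < w[d], v c < w := fun c hc => by
    conv_rhs => rw [← List.take_append_drop d w, List.drop_eq_getElem_cons hd]
    exact List.append_left_lt (List.cons_lt_cons_iff.mpr (Or.inl hc))
  have hv_le : ∀ c, w'[d] ≤ c → c < w[d] → v c ≤ w' := fun c hc hcw =>
    hw'max _ (hv_len c) (hv_sm c hc) (hv_lt c hcw).le
  have hw'_eq : w' = v w'[d] := by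
    refine le_antisymm ?_ (hv_le _ le_rfl hdlt)
    conv_lhs => rw [← List.take_append_drop d w', List.drop_eq_getElem_cons hd', htake]
    exact append_le_append_left _
      (List.cons_le_cons _ (le_replicate_of_forall_le hz (by rw [List.length_drop]; omega)))
  refine ⟨d + 1, by omega, by omega, hd, ⟨_, hdlt⟩, w'[d], hdlt, fun a ha => ?_, ?_⟩
  · by_contra! hab
    refine (hv_le a hab.le ha).not_gt ?_
    rw [hw'_eq]
    exact List.append_left_lt (List.cons_lt_cons_iff.mpr (Or.inl hab))
  · simpa [v] using hw'_eq

/-- If `w` of length `n ≥ 1` is not self-minimal, `z` is the maximal letter, and `w'`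
is the lexicographically greatest self-minimal word of length `n` with `w' ≤ w`, then
`w' = w_(k-1)·b'·z^(n-k)` for some `1 ≤ k ≤ n` such that `w[k]` is not the minimal
letter, where `b'` is the greatest letter smaller than `w[k]`. -/
theorem stmt_2 [LinearOrder α] [Fintype α] [Nonempty α]
    (w w' : List α) (n : ℕ) (hn : 1 ≤ n) (hw : w.length = n)
    (hnotsm : ¬ SelfMinimal w)
    (z : α) (hz : ∀ a : α, a ≤ z)
    (hw'len : w'.length = n) (hw'sm : SelfMinimal w') (hw'le : w' ≤ w)
    (hw'max : ∀ u : List α, u.length = n → SelfMinimal u → u ≤ w → u ≤ w') :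
    ∃ k, 1 ≤ k ∧ k ≤ n ∧ ∃ (hk : k - 1 < w.length),
      (∃ a : α, a < w.get ⟨k - 1, hk⟩) ∧
      ∃ b' : α, b' < w.get ⟨k - 1, hk⟩ ∧
        (∀ a : α, a < w.get ⟨k - 1, hk⟩ → a ≤ b') ∧
        w' = w.take (k - 1) ++ [b'] ++ List.replicate (n - k) z :=
  stmt_2_general w w' n hw hnotsm z hz hw'len hw'sm hw'le hw'max

end Lyndon
end

section
/- Let n ≥ 1 and let λ₁ and λ₂ be Lyndon words over Σ whose lengths divide n. Then it is not possible that λ₁ < λ₂ ≤ λ₁^(n/|λ₁|) in the lexicographic order. -/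
/-!
A Lyndon word `w` is at most each of its nonempty suffixes `v`, say `w = p v`. Otherwise `v < w`,
and either `v` differs from `w` at a letter, so that the rotation `v p` is already smaller than `w`,
or `v` is a border, `w = p v = v r`; then the rotations `v p` and `r v` of `w` give `r ≤ p` and
`p ≤ r`, so `p v = v p` and primitivity is violated.

Consequently, if `u < w` then `u^k < v` for every nonempty suffix `v` of `w`, by induction on `k`:
from `u < w ≤ v`, either `u` differs from `v` at a letter, and `u^k` inherits the difference, or
`v = u r` with `r` a shorter nonempty suffix, and `u^(k-1) < r`. In particular `u^k < w`.
-/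

namespace Lyndon

variable {α : Type*}

theorem power_succ (u : List α) (k : ℕ) : power u (k + 1) = u ++ power u k := by
  simp [power, List.replicate_succ]

theorem power_add (u : List α) (a b : ℕ) : power u (a + b) = power u a ++ power u b := by
  simp only [power, List.replicate_add, List.flatten_append]

theorem length_power (u : List α) (k : ℕ) : (power u k).length = k * u.length := by
  induction k with
  | zero => simp [power]
  | succ k ih => rw [power_succ, List.length_append, ih]; ring

theorem exists_power_of_append_comm {x y : List α} (h : x ++ y = y ++ x) :
    ∃ z k m, x = power z k ∧ y = power z m := by
  induction hn : x.length + y.length using Nat.strong_induction_on generalizing x y with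
  | _ n ih =>
  wlog hxy : x.length ≤ y.length generalizing x y
  · obtain ⟨z, k, m, hx, hy⟩ := this h.symm (by omega) (by omega)
    exact ⟨z, m, k, hy, hx⟩
  obtain ⟨t, rfl⟩ : x <+: y :=
    List.prefix_of_prefix_length_le (h ▸ List.prefix_append x y) (List.prefix_append y x) hxy
  rcases eq_or_ne x [] with rfl | hx
  · exact ⟨t, 0, 1, rfl, by simp [power]⟩
  have hxt : x ++ t = t ++ x := List.append_cancel_left (as := x) (by rw [h, List.append_assoc])
  have hlt : x.length + t.length < n := by
    have := List.length_pos_iff.mpr hx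
    simp only [List.length_append] at hn
    omega
  obtain ⟨z, k, m, rfl, rfl⟩ := ih _ hlt hxt rfl
  exact ⟨z, k, k + m, rfl, (power_add z k m).symm⟩

theorem Primitive.eq_nil_or_eq_nil_of_append_comm {x y : List α} (hp : Primitive (x ++ y))
    (h : x ++ y = y ++ x) : x = [] ∨ y = [] := by
  obtain ⟨z, k, m, rfl, rfl⟩ := exists_power_of_append_comm h
  by_contra! hne
  have hk : k * z.length ≠ 0 := by simpa [← length_power] using hne.1
  have hm : m * z.length ≠ 0 := by simpa [← length_power] using hne.2
  have : 0 < k := Nat.pos_of_ne_zero (left_ne_zero_of_mul hk)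
  have : 0 < m := Nat.pos_of_ne_zero (left_ne_zero_of_mul hm)
  have : 0 < z.length := Nat.pos_of_ne_zero (right_ne_zero_of_mul hk)
  have hz := congrArg List.length (hp z (k + m) (by omega) (power_add z k m).symm)
  rw [List.length_append, length_power, length_power] at hz
  nlinarith

theorem foldr_min_le_of_mem {β : Type*} [LinearOrder β] {l : List β} (b : β) {a : β}
    (ha : a ∈ l) : l.foldr min b ≤ a := by
  induction l with
  | nil => simp at ha
  | cons d l ih =>
    rcases List.mem_cons.mp ha with rfl | ha
    · exact min_le_left _ _
    · exact (min_le_right _ _).trans (ih ha)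

section

variable [LinearOrder α]

theorem append_cons_lt_append_cons (u : List α) {a b : α} (s t : List α) (hab : a < b) :
    u ++ a :: s < u ++ b :: t :=
  List.append_left_lt (List.Lex.rel hab)

theorem eq_append_or_exists_mismatch_of_lt {x y : List α} (h : x < y) :
    (∃ z, z ≠ [] ∧ y = x ++ z) ∨
      ∃ u s t a b, a < b ∧ x = u ++ a :: s ∧ y = u ++ b :: t := by
  induction h with
  | nil => exact .inl ⟨_, List.cons_ne_nil _ _, rfl⟩
  | @cons c _ _ _ ih =>
    rcases ih with ⟨z, hz, rfl⟩ | ⟨u, s, t, a, b, hab, rfl, rfl⟩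
    · exact .inl ⟨z, hz, rfl⟩
    · exact .inr ⟨c :: u, s, t, a, b, hab, rfl, rfl⟩
  | @rel a _ b _ hab => exact .inr ⟨[], _, _, a, b, hab, rfl, rfl⟩

theorem le_of_append_le_append_left {u x y : List α} (h : u ++ x ≤ u ++ y) : x ≤ y :=
  not_lt.mp fun hyx => not_lt.mpr h (List.append_left_lt hyx)

theorem le_of_append_le_append_right {x y z : List α} (hlen : x.length = y.length)
    (h : x ++ z ≤ y ++ z) : x ≤ y := by
  refine le_of_not_gt fun hyx => ?_
  rcases eq_append_or_exists_mismatch_of_lt hyx with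
    ⟨w, hw, rfl⟩ | ⟨u, s, t, a, b, hab, rfl, rfl⟩
  · simp [List.length_append, hw] at hlen
  · exact not_lt_of_ge h (by simpa using append_cons_lt_append_cons u (s ++ z) (t ++ z) hab)

theorem SelfMinimal.le_rot {w : List α} (h : SelfMinimal w) {c : ℕ} (hc : c < w.length) :
    w ≤ rot w c := by
  have hmem : rot w c ∈ (List.range w.length).map (rot w) :=
    List.mem_map.mpr ⟨c, List.mem_range.mpr hc, rfl⟩
  calc w = minrot w := h.symm
    _ ≤ rot w c := foldr_min_le_of_mem w hmem

theorem SelfMinimal.le_append_swap {p v : List α} (h : SelfMinimal (p ++ v)) :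
    p ++ v ≤ v ++ p := by
  rcases eq_or_ne v [] with rfl | hv
  · simp
  have hp : p.length < (p ++ v).length := by simp [List.length_pos_iff.mpr hv]
  have := h.le_rot hp
  rwa [rot, Nat.mod_eq_of_lt hp, List.drop_left, List.take_left] at this

theorem IsLyndon.le_of_suffix {w v : List α} (h : IsLyndon w) (hv : v <:+ w) (hne : v ≠ []) :
    w ≤ v := by
  obtain ⟨p, rfl⟩ := hv
  refine le_of_not_gt fun hlt => ?_
  have hswap := h.2.2.le_append_swap
  rcases eq_append_or_exists_mismatch_of_lt hlt with
    ⟨r, -, hpv⟩ | ⟨u, s, t, a, b, hab, rfl, hpv⟩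
  · have hrp : r ≤ p := le_of_append_le_append_left (hpv ▸ hswap)
    have hpr : p ≤ r := by
      have hswap' := (hpv ▸ h.2.2).le_append_swap
      refine le_of_append_le_append_right ?_ (hpv ▸ hswap')
      have := congrArg List.length hpv
      simp only [List.length_append] at this
      omega
    obtain rfl := le_antisymm hpr hrp
    rcases h.2.1.eq_nil_or_eq_nil_of_append_comm hpv with rfl | rfl
    · exact lt_irrefl _ hlt
    · exact hne rfl
  · refine not_lt_of_ge hswap ?_
    rw [hpv]
    simpa using append_cons_lt_append_cons u (s ++ p) t hab

theorem power_lt_of_forall_suffix_le {u w : List α} (hw : ∀ v, v <:+ w → v ≠ [] → w ≤ v)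
    (huw : u < w) (k : ℕ) {v : List α} (hv : v <:+ w) (hne : v ≠ []) : power u k < v := by
  induction k generalizing v with
  | zero =>
    obtain ⟨a, v', rfl⟩ := List.exists_cons_of_ne_nil hne
    exact List.nil_lt_cons a v'
  | succ k ih =>
    rw [power_succ]
    rcases eq_append_or_exists_mismatch_of_lt (huw.trans_le (hw v hv hne)) with
      ⟨z, hz, rfl⟩ | ⟨x, s, t, a, b, hab, rfl, rfl⟩
    · exact List.append_left_lt (ih ((List.suffix_append u z).trans hv) hz)
    · simpa using append_cons_lt_append_cons x (s ++ power (x ++ a :: s) k) t hab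

theorem IsLyndon.power_lt {u w : List α} (h : IsLyndon w) (huw : u < w) (k : ℕ) :
    power u k < w :=
  power_lt_of_forall_suffix_le (fun _ hv hne => h.le_of_suffix hv hne) huw k
    (List.suffix_refl w) h.1

end

theorem stmt_3_general [LinearOrder α]
    (n : ℕ) (l1 l2 : List α)
    (h2 : IsLyndon l2) :
    ¬ (l1 < l2 ∧ l2 ≤ power l1 (n / l1.length)) := fun ⟨hlt, hle⟩ =>
  not_lt_of_ge hle (h2.power_lt hlt _)

/-- For Lyndon words `λ₁, λ₂` with lengths dividing `n ≥ 1`, it is impossible that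
`λ₁ < λ₂ ≤ λ₁^(n/|λ₁|)`. -/
theorem stmt_3 [LinearOrder α] [Fintype α] [Nonempty α]
    (n : ℕ) (hn : 1 ≤ n) (l1 l2 : List α)
    (h1 : IsLyndon l1) (h2 : IsLyndon l2)
    (hd1 : l1.length ∣ n) (hd2 : l2.length ∣ n) :
    ¬ (l1 < l2 ∧ l2 ≤ power l1 (n / l1.length)) :=
  stmt_3_general n l1 l2 h2

end Lyndon
end

section
/- For all words w and x of the same length n ≥ 1 over Σ: minrot(x) ≤ w if and only if the word x·x (the concatenation of x with itself) contains a factor (contiguous subword) belonging to Pref_-(w). -/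
/-!
Since `minrot x` is the least rotation of `x`, `minrot x ≤ w` holds iff some rotation of `x` is
`≤ w`. A word `u` with `|u| = |w|` is `≤ w` iff `u = w` or `u` agrees with `w` up to a first
position where its letter is smaller, i.e. iff some prefix of `u` lies in `Pref₋(w)`. Finally, the
factors of `x·x` of length at most `|x|` are exactly the prefixes of the rotations of `x`.
-/

namespace Lyndon

variable {α : Type*}

theorem rot_eq_rotate (w : List α) (c : ℕ) : rot w c = w.rotate c :=
  List.rotate_eq_drop_append_take_mod.symm

theorem foldr_min_le_iff {β : Type*} [LinearOrder β] (l : List β) (b a : β) :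
    l.foldr min b ≤ a ↔ b ≤ a ∨ ∃ c ∈ l, c ≤ a := by
  induction l with
  | nil => simp
  | cons c l ih =>
    simp only [List.foldr_cons, min_le_iff, ih, List.mem_cons, exists_eq_or_imp]
    tauto

theorem minrot_le_iff [LinearOrder α] (x w : List α) :
    minrot x ≤ w ↔ ∃ c, x.rotate c ≤ w := by
  simp only [minrot, foldr_min_le_iff, List.mem_map, List.mem_range, exists_exists_and_eq_and,
    rot_eq_rotate]
  constructor
  · rintro (h | ⟨c, -, h⟩)
    · exact ⟨0, by rwa [List.rotate_zero]⟩
    · exact ⟨c, h⟩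
  · rintro ⟨c, h⟩
    rcases eq_or_ne x [] with rfl | hx
    · exact Or.inl (by simpa using h)
    · refine Or.inr ⟨c % x.length, Nat.mod_lt _ (List.length_pos_iff.2 hx), ?_⟩
      rwa [List.rotate_mod]

theorem length_le_of_mem_prefMinus [LinearOrder α] {w y : List α} (hy : y ∈ PrefMinus w) :
    y.length ≤ w.length := by
  rcases hy with ⟨i, s, -, rfl⟩ | rfl
  · simp [Nat.succ_le_of_lt i.isLt]
  · exact le_rfl

theorem le_iff_exists_prefMinus_prefix [LinearOrder α] {u w : List α}
    (h : u.length = w.length) : u ≤ w ↔ ∃ y ∈ PrefMinus w, y <+: u := by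
  constructor
  · intro hle
    rcases hle.lt_or_eq with hlt | rfl
    · obtain ⟨-, hlen⟩ | ⟨i, hiu, hiw, hagree, hi⟩ := List.lt_iff_exists.1 hlt
      · omega
      refine ⟨w.take i ++ [u[i]], Or.inl ⟨⟨i, hiw⟩, u[i], hi, rfl⟩, ?_⟩
      have htake : u.take i = w.take i :=
        List.ext_getElem (by simp [h]) fun j hj _ => by
          simp only [List.getElem_take]
          exact hagree j (by simp at hj; omega)
      rw [← htake, List.take_append_getElem hiu]
      exact List.take_prefix _ _
    · exact ⟨u, Or.inr rfl, List.prefix_refl u⟩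
  · rintro ⟨y, ⟨i, s, hs, rfl⟩ | rfl, t, rfl⟩
    · refine le_of_lt ?_
      conv_rhs => rw [← List.take_append_drop i w, List.drop_eq_getElem_cons i.isLt]
      rw [List.append_assoc, List.singleton_append]
      exact List.append_left_lt (List.cons_lt_cons_iff.2 (Or.inl hs))
    · have : t = [] := by simpa using h
      simp [this]

theorem rotate_isInfix_append_self (x : List α) (c : ℕ) : x.rotate c <:+: x ++ x := by
  rw [List.rotate_eq_drop_append_take_mod]
  exact ⟨x.take (c % x.length), x.drop (c % x.length), by
    rw [← List.append_assoc, List.take_append_drop, List.append_assoc, List.take_append_drop]⟩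

theorem isInfix_append_self_iff {x y : List α} (hy : y.length ≤ x.length) :
    y <:+: x ++ x ↔ ∃ c, y <+: x.rotate c := by
  refine ⟨fun ⟨s, t, hst⟩ => ?_, fun ⟨c, hc⟩ => hc.isInfix.trans (rotate_isInfix_append_self x c)⟩
  have hdrop : y <+: (x ++ x).drop s.length := ⟨t, by rw [← hst]; simp⟩
  rcases le_or_gt s.length x.length with hs | hs
  · refine ⟨s.length, List.prefix_of_prefix_length_le hdrop ?_ (by simpa)⟩
    rw [List.rotate_eq_drop_append_take hs, List.drop_append_of_le_length hs,
      List.prefix_append_right_inj]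
    exact List.take_prefix _ _
  · obtain ⟨j, hj⟩ := Nat.exists_eq_add_of_le hs.le
    have hjx : j ≤ x.length := by
      have := congrArg List.length hst
      simp only [List.length_append] at this
      omega
    rw [hj, List.drop_length_add_append] at hdrop
    refine ⟨j, hdrop.trans ?_⟩
    rw [List.rotate_eq_drop_append_take hjx]
    exact List.prefix_append _ _

theorem stmt_10_general [LinearOrder α]
    (w x : List α) (n : ℕ) (hw : w.length = n) (hx : x.length = n) :
    minrot x ≤ w ↔ ∃ y ∈ PrefMinus w, y <:+: x ++ x := by
  have hlen (c : ℕ) : (x.rotate c).length = w.length := by rw [List.length_rotate, hx, hw]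
  calc minrot x ≤ w ↔ ∃ c, ∃ y ∈ PrefMinus w, y <+: x.rotate c := by
        simp only [minrot_le_iff, le_iff_exists_prefMinus_prefix (hlen _)]
    _ ↔ ∃ y ∈ PrefMinus w, ∃ c, y <+: x.rotate c :=
        ⟨fun ⟨c, y, hy, hc⟩ => ⟨y, hy, c, hc⟩, fun ⟨y, hy, c, hc⟩ => ⟨c, y, hy, hc⟩⟩
    _ ↔ ∃ y ∈ PrefMinus w, y <:+: x ++ x := by
        refine exists_congr fun y => and_congr_right fun hy => ?_
        rw [isInfix_append_self_iff ((length_le_of_mem_prefMinus hy).trans (by rw [hw, hx]))]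

/-- For words `w, x` of the same length `n ≥ 1`: `minrot(x) ≤ w` iff `x·x` contains
a factor belonging to `Pref₋(w)`. -/
theorem stmt_10 [LinearOrder α] [Fintype α] [Nonempty α]
    (w x : List α) (n : ℕ) (hn : 1 ≤ n) (hw : w.length = n) (hx : x.length = n) :
    minrot x ≤ w ↔ ∃ y ∈ PrefMinus w, y <:+: x ++ x :=
  stmt_10_general w x n hw hx

end Lyndon
end
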